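/- The optimization problems min_f max_k ‖h_k‖²(d_P2²(u_k, f) − 1) subject to ‖f‖ = 1 (where u_k = h_k/‖h_k‖) and min_f̃ ‖f̃‖² subject to ‖h_k^H f̃‖² ≥ 1 for all k have solutions related by scaling: if f̃* solves the second problem then f* = f̃*/‖f̃*‖ solves the first, and the optimal values satisfy (optimal value of first) = −1/(optimal value of second). -/

import Mathlib

/-!
The objective of the first problem at `g` equals `-minₖ |⟪h k, g⟫|²`. If that minimum `a` is
positive, `g / √a` is feasible for the second problem, so `‖f̃*‖² a ≤ ‖g‖²`: on unit vectors the
objective is at least `-1 / ‖f̃*‖²`, and feasibility of `f̃*` shows that `f̃* / ‖f̃*‖` attains it.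
-/

open scoped InnerProductSpace

section

variable {𝕜 E ι : Type*} [RCLike 𝕜] [NormedAddCommGroup E] [InnerProductSpace 𝕜 E]

section RealScalars

variable [Module ℝ E] [IsScalarTower ℝ 𝕜 E]

theorem norm_inner_real_smul_left (r : ℝ) (x y : E) :
    ‖⟪r • x, y⟫_𝕜‖ = |r| * ‖⟪x, y⟫_𝕜‖ := by
  rw [RCLike.real_smul_eq_coe_smul (K := 𝕜), inner_smul_left, norm_mul, RCLike.norm_conj,
    RCLike.norm_ofReal]

theorem norm_inner_real_smul_right (r : ℝ) (x y : E) :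
    ‖⟪x, r • y⟫_𝕜‖ = |r| * ‖⟪x, y⟫_𝕜‖ := by
  rw [RCLike.real_smul_eq_coe_smul (K := 𝕜), inner_smul_right, norm_mul, RCLike.norm_ofReal]

theorem sq_norm_mul_norm_inner_normalize_sq_sub (x y : E) :
    ‖x‖ ^ 2 * ((1 - ‖⟪(‖x‖⁻¹ : ℝ) • x, y⟫_𝕜‖ ^ 2) - 1) = -‖⟪x, y⟫_𝕜‖ ^ 2 := by
  rcases eq_or_ne x 0 with rfl | hx
  · simp
  · have : ‖x‖ ≠ 0 := norm_ne_zero_iff.mpr hx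
    rw [norm_inner_real_smul_left, abs_inv, abs_norm]
    field_simp
    ring

theorem iSup_neg_norm_inner_real_smul_sq_le [Nonempty ι] {h : ι → E} {x : E}
    (hx : ∀ k, 1 ≤ ‖⟪h k, x⟫_𝕜‖ ^ 2) (r : ℝ) :
    ⨆ k, -‖⟪h k, r • x⟫_𝕜‖ ^ 2 ≤ -r ^ 2 := by
  refine ciSup_le fun k => neg_le_neg ?_
  rw [norm_inner_real_smul_right, mul_pow, sq_abs]
  exact le_mul_of_one_le_right (sq_nonneg r) (hx k)

end RealScalars

variable {h : ι → E} {x : E}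

theorem sq_norm_mul_le_of_le_norm_inner_sq
    (hmin : ∀ y : E, (∀ k, 1 ≤ ‖⟪h k, y⟫_𝕜‖ ^ 2) → ‖x‖ ^ 2 ≤ ‖y‖ ^ 2)
    {y : E} {a : ℝ} (ha : ∀ k, a ≤ ‖⟪h k, y⟫_𝕜‖ ^ 2) : ‖x‖ ^ 2 * a ≤ ‖y‖ ^ 2 := by
  rcases le_or_gt a 0 with ha0 | ha0
  · exact (mul_nonpos_of_nonneg_of_nonpos (sq_nonneg _) ha0).trans (sq_nonneg _)
  -- `y / √a` is feasible, so `‖x‖² ≤ ‖y‖² / a`.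
  set c : 𝕜 := (((√a)⁻¹ : ℝ) : 𝕜)
  have hc : ‖c‖ ^ 2 = a⁻¹ := by
    rw [RCLike.norm_ofReal, sq_abs, inv_pow, Real.sq_sqrt ha0.le]
  have hfeas : ∀ k, 1 ≤ ‖⟪h k, c • y⟫_𝕜‖ ^ 2 := fun k => by
    rw [inner_smul_right, norm_mul, mul_pow, hc, ← div_eq_inv_mul, one_le_div ha0]
    exact ha k
  have := hmin _ hfeas
  rwa [norm_smul, mul_pow, hc, ← div_eq_inv_mul, le_div_iff₀ ha0] at this

theorem neg_div_le_iSup_neg_norm_inner_sq [Finite ι] [Nonempty ι]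
    (hmin : ∀ y : E, (∀ k, 1 ≤ ‖⟪h k, y⟫_𝕜‖ ^ 2) → ‖x‖ ^ 2 ≤ ‖y‖ ^ 2) (hx : x ≠ 0) (y : E) :
    -‖y‖ ^ 2 / ‖x‖ ^ 2 ≤ ⨆ k, -‖⟪h k, y⟫_𝕜‖ ^ 2 := by
  obtain ⟨i, hi⟩ := Finite.exists_min fun k => ‖⟪h k, y⟫_𝕜‖ ^ 2
  have hle := sq_norm_mul_le_of_le_norm_inner_sq hmin hi
  refine le_ciSup_of_le (Set.finite_range _).bddAbove i ?_
  rwa [neg_div, neg_le_neg_iff, le_div_iff₀ (by positivity), mul_comm]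

end

theorem stmt_15_general (N K : ℕ) (hK : 0 < K) (h : Fin K → EuclideanSpace ℂ (Fin N))
    (ft : EuclideanSpace ℂ (Fin N))
    (hfeas : ∀ k, 1 ≤ ‖(inner ℂ (h k) ft : ℂ)‖ ^ 2)
    (hopt : ∀ g : EuclideanSpace ℂ (Fin N),
      (∀ k, 1 ≤ ‖(inner ℂ (h k) g : ℂ)‖ ^ 2) → ‖ft‖ ^ 2 ≤ ‖g‖ ^ 2) :
    haveI : Nonempty (Fin K) := Fin.pos_iff_nonempty.mp hK
    let obj : EuclideanSpace ℂ (Fin N) → ℝ := fun g =>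
      ⨆ k, ‖h k‖ ^ 2 *
        ((1 - ‖(inner ℂ ((‖h k‖⁻¹ : ℝ) • h k) g : ℂ)‖ ^ 2) - 1)
    let f : EuclideanSpace ℂ (Fin N) := (‖ft‖⁻¹ : ℝ) • ft
    ‖f‖ = 1 ∧ (∀ g : EuclideanSpace ℂ (Fin N), ‖g‖ = 1 → obj f ≤ obj g)
      ∧ obj f = -1 / ‖ft‖ ^ 2 := by
  have : Nonempty (Fin K) := Fin.pos_iff_nonempty.mp hK
  intro obj f
  have hobj (g : EuclideanSpace ℂ (Fin N)) : obj g = ⨆ k, -‖(inner ℂ (h k) g : ℂ)‖ ^ 2 :=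
    iSup_congr fun k => sq_norm_mul_norm_inner_normalize_sq_sub (h k) g
  have hft : ft ≠ 0 := by
    rintro rfl
    have := hfeas ⟨0, hK⟩
    norm_num at this
  have hf : ‖f‖ = 1 := norm_smul_inv_norm hft
  have hlow (g : EuclideanSpace ℂ (Fin N)) (hg : ‖g‖ = 1) : -1 / ‖ft‖ ^ 2 ≤ obj g := by
    simpa [hg, hobj] using neg_div_le_iSup_neg_norm_inner_sq hopt hft g
  have hup : obj f ≤ -1 / ‖ft‖ ^ 2 := by
    simpa [hobj, neg_div] using iSup_neg_norm_inner_real_smul_sq_le hfeas ‖ft‖⁻¹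
  exact ⟨hf, fun g hg => hup.trans (hlow g hg), le_antisymm hup (hlow f hf)⟩

/-- Duality of scaling between the AirComp problem
`min_{‖f‖=1} max_k ‖h_k‖²(d_P2²(u_k,f) − 1)` (with `u_k = h_k/‖h_k‖` and
`d_P2²(u_k,f) = 1 − |⟨u_k,f⟩|²`) and the multicast-type problem
`min ‖f̃‖² s.t. |⟨h_k,f̃⟩|² ≥ 1 ∀k`: if `f̃*` solves the latter, then
`f* = f̃*/‖f̃*‖` solves the former, and the optimal values are negative reciprocals. -/
theorem stmt_15 (N K : ℕ) (hK : 0 < K) (h : Fin K → EuclideanSpace ℂ (Fin N))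
    (hh : ∀ k, h k ≠ 0) (ft : EuclideanSpace ℂ (Fin N)) (hft : ft ≠ 0)
    (hfeas : ∀ k, 1 ≤ ‖(inner ℂ (h k) ft : ℂ)‖ ^ 2)
    (hopt : ∀ g : EuclideanSpace ℂ (Fin N),
      (∀ k, 1 ≤ ‖(inner ℂ (h k) g : ℂ)‖ ^ 2) → ‖ft‖ ^ 2 ≤ ‖g‖ ^ 2) :
    haveI : Nonempty (Fin K) := Fin.pos_iff_nonempty.mp hK
    let obj : EuclideanSpace ℂ (Fin N) → ℝ := fun g =>
      ⨆ k, ‖h k‖ ^ 2 *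
        ((1 - ‖(inner ℂ ((‖h k‖⁻¹ : ℝ) • h k) g : ℂ)‖ ^ 2) - 1)
    let f : EuclideanSpace ℂ (Fin N) := (‖ft‖⁻¹ : ℝ) • ft
    ‖f‖ = 1 ∧ (∀ g : EuclideanSpace ℂ (Fin N), ‖g‖ = 1 → obj f ≤ obj g)
      ∧ obj f = -1 / ‖ft‖ ^ 2 :=
  stmt_15_general N K hK h ft hfeas hopt
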